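/- arXiv:2206.05721 — 2 statements merged into one kernel-verified Lean document; each statement's English description precedes it below -/
import Mathlib

section
/- In the free Z-module spanned by tuples of group elements, the element β_t := ∑_{π ∈ Sym_k} sgn(π) (π̲.(t_1,…,t_k)) (where π̲ is the braid lift of π acting via the Hurwitz action) satisfies β_t = ∑_{i=1}^k (−1)^{k−i} (β_{t(î)}, (t_{i+1}⋯t_k)^{-1} t_i (t_{i+1}⋯t_k)), where t(î) denotes the tuple obtained by removing the i-th entry and (β, g) denotes appending g to each tuple in the linear combination β. -/
/-- The Hurwitz move `σ_{i+1}` (0-based index `i`) on a tuple of group elements,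
represented as a list: it replaces `(…, a, b, …)` at positions `i, i+1` by
`(…, b, b⁻¹ * a * b, …)`. -/
def hurwitzMove {G : Type*} [Group G] : ℕ → List G → List G
  | 0, a :: b :: l => b :: (b⁻¹ * a * b) :: l
  | n + 1, a :: l => a :: hurwitzMove n l
  | _, l => l

/-- The Hurwitz action of a word in the braid generators (a braid `σ_{i_1} ⋯ σ_{i_p}`
acts by applying `σ_{i_p}` first), with 0-based generator indices. -/
def hurwitzWord {G : Type*} [Group G] (w : List ℕ) (t : List G) : List G :=
  w.foldr hurwitzMove t

/-- The standard Coxeter generator `s_{i+1} = (i+1, i+2)` (0-based index `i`) of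
`Sym_k = Perm (Fin k)`, defined to be the identity if `i + 1 ≥ k`. -/
def symGenN (k : ℕ) (i : ℕ) : Equiv.Perm (Fin k) :=
  if h : i + 1 < k then Equiv.swap ⟨i, by omega⟩ ⟨i + 1, h⟩ else 1

/-- `w` is a reduced expression (with 0-based generator indices) for
`π ∈ Sym_k` in the standard generators `s_i`. -/
def IsReducedWordN (k : ℕ) (π : Equiv.Perm (Fin k)) (w : List ℕ) : Prop :=
  (∀ i ∈ w, i + 1 < k) ∧ (w.map (symGenN k)).prod = π ∧
    ∀ w' : List ℕ, (∀ i ∈ w', i + 1 < k) → (w'.map (symGenN k)).prod = π →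
      w.length ≤ w'.length

/-- The element `β_t = ∑_{π ∈ Sym_k} sgn(π) (π̲.t)` of the free abelian group on
tuples, where `π̲` is the braid lift of `π` (given by a choice `A` of reduced
word for each permutation) acting via the Hurwitz action. -/
noncomputable def betaElt {G : Type*} [Group G] (k : ℕ)
    (A : Equiv.Perm (Fin k) → List ℕ) (t : List G) : FreeAbelianGroup (List G) :=
  ∑ π : Equiv.Perm (Fin k),
    ((Equiv.Perm.sign π : ℤˣ) : ℤ) • FreeAbelianGroup.of (hurwitzWord (A π) t)

/-!
The braid lift of `π` acts on a tuple `t` by an explicit formula: entry `j` of `π̲.t` is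
`t_{π⁻¹ j}` conjugated by the ordered product of the `t_m` over the strands `m` that cross it from
the right (`m > π⁻¹ j` and `π m < j`). This is checked one Hurwitz move at a time along a reduced
word: reducedness means (by counting inversions) that every generator crosses a new pair of
strands. In particular `π̲.t` does not depend on the reduced word.

Every `π ∈ Sym_k` factors uniquely as the cycle moving `i` to the last place (keeping the order
of the other entries) followed by some `σ ∈ Sym_{k-1}`; then `sgn π = (-1)^(k-i) sgn σ`, and the
formula gives `π̲.t = (σ̲.t(î), (t_{i+1}⋯t_k)⁻¹ t_i (t_{i+1}⋯t_k))`, since the strand from `i` to `k` is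
crossed exactly by the strands starting after `i`. Reindexing the sum defining `β_t` by `(i, σ)`
gives the expansion.
-/

open Equiv

section OrderedProd

variable {M : Type*} [Monoid M]

def orderedProd {k : ℕ} (p : Fin k → Prop) [DecidablePred p] (f : Fin k → M) : M :=
  (((List.finRange k).filter (p ·)).map f).prod

variable {k : ℕ} {p q : Fin k → Prop} [DecidablePred p] [DecidablePred q] {f : Fin k → M}

theorem orderedProd_congr (h : ∀ m, p m ↔ q m) : orderedProd p f = orderedProd q f := by
  simp only [orderedProd, h]

theorem orderedProd_eq_one (h : ∀ m, ¬ p m) : orderedProd p f = 1 := by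
  simp [orderedProd, h]

theorem orderedProd_split (x : Fin k) :
    orderedProd p f = orderedProd (fun m => p m ∧ m < x) f * (if p x then f x else 1) *
      orderedProd (fun m => p m ∧ x < m) f := by
  have hsorted := List.pairwise_lt_finRange k
  have hsplit : (List.finRange k).filter (p ·) =
      (List.finRange k).filter (fun m => p m ∧ m < x) ++ (if p x then [x] else []) ++
        (List.finRange k).filter (fun m => p m ∧ x < m) := by
    refine (hsorted.filter _).eq_of_mem_iff ?_ fun m => ?_
    · split_ifs <;> simp [List.pairwise_append, hsorted.filter] <;> grind
    · rcases lt_trichotomy m x with h | rfl | h <;>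
        split_ifs <;> simp_all [not_lt_of_gt]
  simp only [orderedProd, hsplit, List.map_append, List.prod_append, mul_assoc]
  split_ifs <;> simp

theorem orderedProd_succAbove {n : ℕ} {p : Fin (n + 1) → Prop} [DecidablePred p]
    {f : Fin (n + 1) → M} (i : Fin (n + 1)) (hi : ¬ p i) :
    orderedProd p f = orderedProd (fun m => p (i.succAbove m)) (fun m => f (i.succAbove m)) := by
  have hsplit : (List.finRange (n + 1)).filter (p ·) =
      ((List.finRange n).filter (fun m => p (i.succAbove m))).map i.succAbove := by
    refine ((List.pairwise_lt_finRange _).filter _).eq_of_mem_iff ?_ fun m => ?_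
    · exact List.Pairwise.map _ (fun _ _ h => Fin.strictMono_succAbove i h)
        ((List.pairwise_lt_finRange n).filter _)
    · rcases Fin.eq_self_or_eq_succAbove i m with rfl | ⟨m, rfl⟩ <;> simp [hi]
  simp only [orderedProd, hsplit, List.map_map]
  rfl

theorem finRange_filter_lt_eq_drop (i : ℕ) :
    (List.finRange k).filter (fun m : Fin k => i < (m : ℕ)) =
      List.drop (i + 1) (List.finRange k) := by
  refine ((List.pairwise_lt_finRange k).filter _).eq_of_mem_iff
    (List.pairwise_lt_finRange k).drop fun m => ?_
  simp only [List.mem_filter, List.mem_finRange, true_and, decide_eq_true_eq,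
    List.mem_drop_iff_getElem, List.getElem_finRange, Fin.ext_iff, Fin.val_cast]
  constructor
  · intro h
    exact ⟨m - (i + 1), by simp; omega, by omega⟩
  · rintro ⟨j, -, h⟩
    omega

theorem orderedProd_gt_eq_prod_drop (t : List M) (ht : t.length = k) (i : ℕ) :
    orderedProd (fun m : Fin k => i < (m : ℕ)) (fun m => t.getD m 1) = (t.drop (i + 1)).prod := by
  subst ht
  have ht : List.ofFn (fun m : Fin t.length => t.getD m 1) = t := by
    conv_rhs => rw [← List.ofFn_getElem (xs := t)]
    simp
  conv_rhs => rw [← ht, List.ofFn_eq_map, ← List.map_drop, ← finRange_filter_lt_eq_drop]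
  rfl

end OrderedProd

section AdjacentSwap

variable {k : ℕ} {a b : Fin k}

theorem symGenN_of_lt {i : ℕ} (h : i + 1 < k) : symGenN k i = swap ⟨i, by omega⟩ ⟨i + 1, h⟩ :=
  dif_pos h

theorem lt_left_of_lt_right (hab : (b : ℕ) = a + 1) {x : Fin k} (hxb : x < b) (hxa : x ≠ a) :
    x < a := by
  rw [Fin.lt_def] at *
  have := Fin.val_ne_of_ne hxa
  omega

theorem swap_lt_left_iff (hab : (b : ℕ) = a + 1) (x : Fin k) : swap a b x < a ↔ x < a := by
  rw [swap_apply_def]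
  split_ifs <;> grind

theorem swap_lt_right_iff (hab : (b : ℕ) = a + 1) (x : Fin k) :
    swap a b x < b ↔ x < a ∨ x = b := by
  rw [swap_apply_def]
  split_ifs <;> grind

theorem swap_lt_iff_of_ne (hab : (b : ℕ) = a + 1) {j : Fin k} (hja : j ≠ a) (hjb : j ≠ b)
    (x : Fin k) : swap a b x < j ↔ x < j := by
  rw [swap_apply_def]
  split_ifs <;> grind

theorem swap_lt_swap_iff (hab : (b : ℕ) = a + 1) (x y : Fin k) :
    swap a b x < swap a b y ↔ (x < y ∧ ¬(x = a ∧ y = b)) ∨ (x = b ∧ y = a) := by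
  simp only [swap_apply_def]
  split_ifs <;> grind

end AdjacentSwap

section HurwitzLift

variable {G : Type*} [Group G]

theorem hurwitzMove_length : ∀ (i : ℕ) (t : List G), (hurwitzMove i t).length = t.length
  | 0, [] | 0, [_] | 0, _ :: _ :: _ | _ + 1, [] => rfl
  | n + 1, a :: t => by simp [hurwitzMove, hurwitzMove_length n t]

theorem getD_hurwitzMove : ∀ (i : ℕ) (t : List G), i + 1 < t.length → ∀ j : ℕ,
    (hurwitzMove i t).getD j 1 =
      if j = i then t.getD (i + 1) 1
      else if j = i + 1 then (t.getD (i + 1) 1)⁻¹ * t.getD i 1 * t.getD (i + 1) 1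
      else t.getD j 1
  | 0, _ :: _ :: _, _, 0 | 0, _ :: _ :: _, _, 1 | 0, _ :: _ :: _, _, _ + 2
  | _ + 1, _ :: _, _, 0 => by simp [hurwitzMove]
  | n + 1, _ :: t, h, j + 1 => by
      simp only [hurwitzMove, List.getD_cons_succ, getD_hurwitzMove n t (by simpa using h) j,
        Nat.add_right_cancel_iff]
  | 0, [], h, _ | 0, [_], h, _ | _ + 1, [], h, _ => by simp at h

variable {k : ℕ}

def crossingProd (π : Perm (Fin k)) (t : List G) (j : Fin k) : G :=
  orderedProd (fun m => π⁻¹ j < m ∧ π m < j) (fun m => t.getD m 1)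

def hurwitzLiftEntry (π : Perm (Fin k)) (t : List G) (j : Fin k) : G :=
  (crossingProd π t j)⁻¹ * t.getD (π⁻¹ j) 1 * crossingProd π t j

def hurwitzLift (π : Perm (Fin k)) (t : List G) : List G :=
  List.ofFn (hurwitzLiftEntry π t)

theorem length_hurwitzLift (π : Perm (Fin k)) (t : List G) : (hurwitzLift π t).length = k := by
  simp [hurwitzLift]

theorem getD_hurwitzLift (π : Perm (Fin k)) (t : List G) (j : Fin k) :
    (hurwitzLift π t).getD j 1 = hurwitzLiftEntry π t j := by
  simp [hurwitzLift]

theorem hurwitzLift_one (t : List G) (ht : t.length = k) :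
    hurwitzLift (1 : Perm (Fin k)) t = t := by
  have hc (j : Fin k) : crossingProd 1 t j = 1 :=
    orderedProd_eq_one fun m ⟨h₁, h₂⟩ => (h₁.trans h₂).false
  refine List.ext_getElem (by simp [length_hurwitzLift, ht]) fun j h₁ h₂ => ?_
  simp [hurwitzLift, hurwitzLiftEntry, hc, List.getElem?_eq_getElem h₂]

section Swap

variable {a b : Fin k} (hab : (b : ℕ) = a + 1) (π : Perm (Fin k)) (t : List G)
include hab

theorem crossingProd_swap_mul_left (hd : π⁻¹ a < π⁻¹ b) :
    crossingProd (swap a b * π) t a = crossingProd π t b := by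
  refine orderedProd_congr fun m => ?_
  simp only [Perm.mul_apply, mul_inv_rev, swap_inv, swap_apply_left, swap_lt_left_iff hab]
  exact and_congr_right fun hm => ⟨fun h => h.trans (Fin.lt_def.2 (by omega)),
    fun h => lt_left_of_lt_right hab h fun e => hd.not_gt (by simpa [← e] using hm)⟩

/-- After the swap, the strand from `π⁻¹ a` ends at `b` and is crossed by `m₀ = π⁻¹ b` besides the
strands that crossed it before; those beyond `m₀` are exactly the strands crossing the one from
`m₀`. -/
theorem crossingProd_swap_mul_right (hd : π⁻¹ a < π⁻¹ b) :
    crossingProd (swap a b * π) t b = crossingProd π t a * hurwitzLiftEntry π t b := by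
  set m₀ := π⁻¹ b
  have hm₀ (m : Fin k) : π m = b ↔ m = m₀ := (Perm.eq_inv_iff_eq).symm
  set p : Fin k → Prop := fun m => π⁻¹ a < m ∧ π m < a
  have hp : ¬ p m₀ := fun h => by simp [m₀, p] at h; omega
  have hcross : crossingProd (swap a b * π) t b =
      orderedProd (fun m => p m ∧ m < m₀) (fun m => t.getD m 1) * t.getD m₀ 1 *
        orderedProd (fun m => p m ∧ m₀ < m) (fun m => t.getD m 1) := by
    have hq (m : Fin k) (hm : m ≠ m₀) :
        ((swap a b * π)⁻¹ b < m ∧ (swap a b * π) m < b) ↔ p m := by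
      simp only [Perm.mul_apply, mul_inv_rev, swap_inv, swap_apply_right, swap_lt_right_iff hab,
        hm₀, or_iff_left hm, p]
    rw [crossingProd, orderedProd_split m₀,
      if_pos ⟨by simpa using hd, by simp [m₀, Fin.lt_def, hab]⟩,
      orderedProd_congr fun m => and_congr_left fun h => hq m h.ne,
      orderedProd_congr fun m => and_congr_left fun h => hq m h.ne']
  have hb : crossingProd π t b = orderedProd (fun m => p m ∧ m₀ < m) (fun m => t.getD m 1) := by
    refine orderedProd_congr fun m => ⟨fun ⟨hm, hπm⟩ => ⟨⟨hd.trans hm, ?_⟩, hm⟩,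
      fun ⟨⟨_, hπm⟩, hm⟩ => ⟨hm, hπm.trans (Fin.lt_def.2 (by omega))⟩⟩
    exact lt_left_of_lt_right hab hπm fun e => (hd.trans hm).ne (by simp [← e])
  have ha : crossingProd π t a =
      orderedProd (fun m => p m ∧ m < m₀) (fun m => t.getD m 1) *
        orderedProd (fun m => p m ∧ m₀ < m) (fun m => t.getD m 1) := by
    rw [crossingProd, orderedProd_split m₀, if_neg hp, mul_one]
  rw [hcross, hurwitzLiftEntry, hb, ha]
  simp only [m₀, mul_assoc, mul_inv_cancel_left]

theorem crossingProd_swap_mul_of_ne {j : Fin k} (hja : j ≠ a) (hjb : j ≠ b) :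
    crossingProd (swap a b * π) t j = crossingProd π t j := by
  refine orderedProd_congr fun m => ?_
  simp [swap_apply_of_ne_of_ne hja hjb, swap_lt_iff_of_ne hab hja hjb]

end Swap

theorem hurwitzMove_hurwitzLift {i : ℕ} (h : i + 1 < k) (π : Perm (Fin k)) (t : List G)
    (hd : π⁻¹ ⟨i, by omega⟩ < π⁻¹ ⟨i + 1, h⟩) :
    hurwitzMove i (hurwitzLift π t) = hurwitzLift (symGenN k i * π) t := by
  rw [symGenN_of_lt h]
  set a : Fin k := ⟨i, by omega⟩
  set b : Fin k := ⟨i + 1, h⟩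
  have hab : (b : ℕ) = a + 1 := rfl
  refine List.ext_getElem (by simp [hurwitzMove_length, length_hurwitzLift]) fun j h₁ h₂ => ?_
  obtain ⟨j, rfl⟩ : ∃ j' : Fin k, (j' : ℕ) = j := ⟨⟨j, by rwa [length_hurwitzLift] at h₂⟩, rfl⟩
  rw [← List.getD_eq_getElem _ 1, ← List.getD_eq_getElem _ 1,
    getD_hurwitzMove i _ (by rwa [length_hurwitzLift]), getD_hurwitzLift]
  rcases eq_or_ne j a with rfl | hja
  · rw [if_pos rfl]
    change (hurwitzLift π t).getD (b : ℕ) 1 = _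
    simp only [getD_hurwitzLift, hurwitzLiftEntry, crossingProd_swap_mul_left hab π t hd]
    simp
  rcases eq_or_ne j b with rfl | hjb
  · rw [if_neg (Fin.val_ne_of_ne hja), if_pos rfl]
    change ((hurwitzLift π t).getD (b : ℕ) 1)⁻¹ * (hurwitzLift π t).getD (a : ℕ) 1 *
      (hurwitzLift π t).getD (b : ℕ) 1 = _
    simp only [getD_hurwitzLift, hurwitzLiftEntry, crossingProd_swap_mul_right hab π t hd]
    simp [mul_assoc]
  · rw [if_neg (Fin.val_ne_of_ne hja), if_neg (Fin.val_ne_of_ne hjb), getD_hurwitzLift]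
    simp [hurwitzLiftEntry, crossingProd_swap_mul_of_ne hab π t hja hjb,
      swap_apply_of_ne_of_ne hja hjb]

end HurwitzLift

section ReducedWord

variable {k : ℕ}

def invCount (π : Perm (Fin k)) : ℕ :=
  (Finset.univ.filter fun p : Fin k × Fin k => p.1 < p.2 ∧ π p.2 < π p.1).card

theorem invCount_one : invCount (1 : Perm (Fin k)) = 0 := by
  simp only [invCount, Perm.one_apply, Finset.card_eq_zero]
  exact Finset.filter_eq_empty_iff.2 fun _ _ h => lt_asymm h.1 h.2

theorem invCount_swap_mul {a b : Fin k} (hab : (b : ℕ) = a + 1) {π : Perm (Fin k)}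
    (hd : π⁻¹ a < π⁻¹ b) : invCount (swap a b * π) = invCount π + 1 := by
  have hinv : (Finset.univ.filter fun p : Fin k × Fin k =>
        p.1 < p.2 ∧ (swap a b * π) p.2 < (swap a b * π) p.1) =
      insert (π⁻¹ a, π⁻¹ b) (Finset.univ.filter fun p => p.1 < p.2 ∧ π p.2 < π p.1) := by
    ext ⟨p, q⟩
    simp only [Finset.mem_filter, Finset.mem_insert, Finset.mem_univ, true_and, Perm.mul_apply,
      swap_lt_swap_iff hab, Prod.mk.injEq, Perm.eq_inv_iff_eq]
    constructor
    · rintro ⟨hpq, ⟨hlt, -⟩ | ⟨hq, hp⟩⟩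
      exacts [Or.inr ⟨hpq, hlt⟩, Or.inl ⟨hp, hq⟩]
    · rintro (⟨hp, hq⟩ | ⟨hpq, hlt⟩)
      · subst hp hq
        simpa using hd
      · refine ⟨hpq, Or.inl ⟨hlt, fun ⟨hq, hp⟩ => hd.not_gt ?_⟩⟩
        simpa [← hp, ← hq] using hpq
  rw [invCount, hinv, Finset.card_insert_of_notMem]
  · rfl
  simp only [Finset.mem_filter, Perm.inv_def, apply_symm_apply, not_and]
  exact fun _ _ h => (Fin.lt_def.1 h).not_ge (by omega)

theorem invCount_swap_mul_of_gt {a b : Fin k} (hab : (b : ℕ) = a + 1) {π : Perm (Fin k)}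
    (hd : π⁻¹ b < π⁻¹ a) : invCount π = invCount (swap a b * π) + 1 := by
  simpa [← mul_assoc] using invCount_swap_mul hab (π := swap a b * π) (by simpa using hd)

theorem eq_one_of_forall_inv_lt_inv_succ {π : Perm (Fin k)}
    (h : ∀ (i : ℕ) (hi : i + 1 < k), π⁻¹ ⟨i, by omega⟩ < π⁻¹ ⟨i + 1, hi⟩) : π = 1 := by
  cases k with
  | zero => exact Subsingleton.elim _ _
  | succ n =>
    have hmono : StrictMono ⇑π⁻¹ := Fin.strictMono_iff_lt_succ.2 fun i => h i (by omega)
    rw [← inv_inv π, show π⁻¹ = 1 from Equiv.ext (congrFun hmono.eq_id), inv_one]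

theorem inv_ne_inv_succ (π : Perm (Fin k)) {i : ℕ} (hi : i + 1 < k) :
    π⁻¹ ⟨i, by omega⟩ ≠ π⁻¹ ⟨i + 1, hi⟩ :=
  π⁻¹.injective.ne (by simp)

theorem invCount_prod_le_length (w : List ℕ) (hw : ∀ i ∈ w, i + 1 < k) :
    invCount (w.map (symGenN k)).prod ≤ w.length := by
  induction w with
  | nil => simp [invCount_one]
  | cons i w ih =>
    have hi : i + 1 < k := hw i List.mem_cons_self
    have hle := ih fun j hj => hw j (List.mem_cons_of_mem _ hj)
    simp only [List.map_cons, List.prod_cons, List.length_cons, symGenN_of_lt hi]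
    rcases lt_or_gt_of_ne (inv_ne_inv_succ (w.map (symGenN k)).prod hi) with hd | hd
    · rw [invCount_swap_mul rfl hd]
      omega
    · have := invCount_swap_mul_of_gt rfl hd
      omega

theorem exists_word_length_eq_invCount (π : Perm (Fin k)) :
    ∃ w : List ℕ, (∀ i ∈ w, i + 1 < k) ∧ (w.map (symGenN k)).prod = π ∧
      w.length = invCount π := by
  induction hn : invCount π using Nat.strong_induction_on generalizing π with
  | _ n ih =>
  by_cases hdesc : ∃ (i : ℕ) (hi : i + 1 < k), π⁻¹ ⟨i + 1, hi⟩ < π⁻¹ ⟨i, by omega⟩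
  · obtain ⟨i, hi, hd⟩ := hdesc
    have hlen := invCount_swap_mul_of_gt (a := ⟨i, by omega⟩) rfl hd
    obtain ⟨w, hw, hprod, hwlen⟩ := ih _ (by omega) (swap ⟨i, by omega⟩ ⟨i + 1, hi⟩ * π) rfl
    refine ⟨i :: w, List.forall_mem_cons.2 ⟨hi, hw⟩, ?_, by simp [hwlen]; omega⟩
    simp [hprod, symGenN_of_lt hi, ← mul_assoc]
  · simp only [not_exists, not_lt] at hdesc
    obtain rfl : π = 1 := eq_one_of_forall_inv_lt_inv_succ fun i hi =>
      (hdesc i hi).lt_of_ne (inv_ne_inv_succ π hi)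
    exact ⟨[], by simp, by simp, by simp [invCount_one, ← hn]⟩

namespace IsReducedWordN

variable {π : Perm (Fin k)} {i : ℕ} {w : List ℕ}

theorem length_eq_invCount (hw : IsReducedWordN k π w) : w.length = invCount π := by
  obtain ⟨hvalid, hprod, hmin⟩ := hw
  obtain ⟨w', hw', hprod', hlen'⟩ := exists_word_length_eq_invCount π
  have := invCount_prod_le_length w hvalid
  have := hmin w' hw' hprod'
  rw [hprod] at *
  omega

theorem of_cons (hw : IsReducedWordN k π (i :: w)) :
    IsReducedWordN k (w.map (symGenN k)).prod w := by
  obtain ⟨hvalid, hprod, hmin⟩ := hw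
  refine ⟨fun j hj => hvalid j (List.mem_cons_of_mem _ hj), rfl, fun w' hw' hprod' => ?_⟩
  simpa using hmin (i :: w') (List.forall_mem_cons.2 ⟨hvalid i List.mem_cons_self, hw'⟩)
    (by simp [hprod', ← hprod])

theorem inv_lt_inv_succ_of_cons (hw : IsReducedWordN k π (i :: w)) (hi : i + 1 < k) :
    (w.map (symGenN k)).prod⁻¹ ⟨i, by omega⟩ < (w.map (symGenN k)).prod⁻¹ ⟨i + 1, hi⟩ := by
  refine (lt_or_gt_of_ne (inv_ne_inv_succ _ hi)).resolve_right fun hd => ?_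
  have hlen := hw.length_eq_invCount
  have hlen' := hw.of_cons.length_eq_invCount
  have hcount := invCount_swap_mul_of_gt rfl hd
  rw [← symGenN_of_lt hi, ← List.prod_cons, ← List.map_cons, hw.2.1] at hcount
  simp only [List.length_cons] at hlen
  omega

end IsReducedWordN

end ReducedWord

theorem hurwitzWord_eq_hurwitzLift {G : Type*} [Group G] {k : ℕ} {π : Perm (Fin k)}
    {w : List ℕ} (hw : IsReducedWordN k π w) (t : List G) (ht : t.length = k) :
    hurwitzWord w t = hurwitzLift π t := by
  induction w generalizing π with
  | nil =>
    obtain ⟨-, rfl, -⟩ := hw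
    exact (hurwitzLift_one t ht).symm
  | cons i w ih =>
    have hi := hw.1 i List.mem_cons_self
    calc hurwitzWord (i :: w) t = hurwitzMove i (hurwitzWord w t) := rfl
      _ = hurwitzLift (symGenN k i * (w.map (symGenN k)).prod) t := by
        rw [ih hw.of_cons, hurwitzMove_hurwitzLift hi _ t (hw.inv_lt_inv_succ_of_cons hi)]
      _ = hurwitzLift π t := by rw [← hw.2.1, List.map_cons, List.prod_cons]

section LastDecomposition

variable {n : ℕ}

def extendLast (σ : Perm (Fin n)) : Perm (Fin (n + 1)) :=
  finSuccEquivLast.symm.permCongr σ.optionCongr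

@[simp]
theorem extendLast_castSucc (σ : Perm (Fin n)) (m : Fin n) :
    extendLast σ m.castSucc = (σ m).castSucc := by
  simp [extendLast, permCongr_apply]

@[simp]
theorem extendLast_last (σ : Perm (Fin n)) : extendLast σ (Fin.last n) = Fin.last n := by
  simp [extendLast, permCongr_apply]

theorem sign_extendLast (σ : Perm (Fin n)) : Perm.sign (extendLast σ) = Perm.sign σ := by
  rw [extendLast, Perm.sign_permCongr, optionCongr_sign]

def lastDecomp (i : Fin (n + 1)) (σ : Perm (Fin n)) : Perm (Fin (n + 1)) :=
  extendLast σ * (Fin.cycleIcc i (Fin.last n))⁻¹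

theorem lastDecomp_apply_self (i : Fin (n + 1)) (σ : Perm (Fin n)) :
    lastDecomp i σ i = Fin.last n := by
  rw [lastDecomp, Perm.mul_apply, Perm.inv_eq_iff_eq.2 (Fin.cycleIcc_of_last (Fin.le_last i)).symm,
    extendLast_last]

theorem lastDecomp_apply_succAbove (i : Fin (n + 1)) (σ : Perm (Fin n)) (m : Fin n) :
    lastDecomp i σ (i.succAbove m) = (σ m).castSucc := by
  have h := congrFun (Fin.cycleIcc_comp_succAbove i (Fin.last n) (Fin.le_last i)) m
  rw [Function.comp_apply, Fin.succAbove_last] at h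
  rw [lastDecomp, Perm.mul_apply, Perm.inv_eq_iff_eq.2 h.symm, extendLast_castSucc]

theorem lastDecomp_inv_last (i : Fin (n + 1)) (σ : Perm (Fin n)) :
    (lastDecomp i σ)⁻¹ (Fin.last n) = i :=
  Perm.inv_eq_iff_eq.2 (lastDecomp_apply_self i σ).symm

theorem lastDecomp_inv_castSucc (i : Fin (n + 1)) (σ : Perm (Fin n)) (j : Fin n) :
    (lastDecomp i σ)⁻¹ j.castSucc = i.succAbove (σ⁻¹ j) :=
  Perm.inv_eq_iff_eq.2 (by simp [lastDecomp_apply_succAbove])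

theorem sign_lastDecomp (i : Fin (n + 1)) (σ : Perm (Fin n)) :
    Perm.sign (lastDecomp i σ) = Perm.sign σ * (-1) ^ (n - i : ℕ) := by
  rw [lastDecomp, Perm.sign_mul, sign_extendLast, Perm.sign_inv,
    Fin.sign_cycleIcc_of_le (Fin.le_last i), Fin.val_last]

theorem lastDecomp_bijective :
    Function.Bijective fun p : Fin (n + 1) × Perm (Fin n) => lastDecomp p.1 p.2 := by
  refine (Fintype.bijective_iff_injective_and_card _).2 ⟨fun ⟨i, σ⟩ ⟨i', σ'⟩ h => ?_, ?_⟩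
  · obtain rfl : i = i' := by
      simpa [lastDecomp_inv_last] using congrArg (fun π => π⁻¹ (Fin.last n)) h
    refine Prod.ext rfl (Equiv.ext fun m => Fin.castSucc_injective _ ?_)
    simpa [lastDecomp_apply_succAbove] using congrArg (fun π => π (i.succAbove m)) h
  · simp [Fintype.card_perm, Nat.factorial_succ]

end LastDecomposition

theorem List.getD_eraseIdx_succAbove {α : Type*} {n : ℕ} (l : List α) (i : Fin (n + 1))
    (m : Fin n) (d : α) : (l.eraseIdx i).getD m d = l.getD (i.succAbove m) d := by
  simp only [List.getD_eq_getElem?_getD, List.getElem?_eraseIdx]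
  rcases lt_or_ge m.castSucc i with h | h
  · rw [Fin.succAbove_of_castSucc_lt _ _ h, if_pos (by simpa [Fin.lt_def] using h)]
    rfl
  · rw [Fin.succAbove_of_le_castSucc _ _ h, if_neg (by simpa [Fin.le_def] using h)]
    rfl

section HurwitzLiftLastDecomp

variable {G : Type*} [Group G] {n : ℕ} (t : List G) (i : Fin (n + 1)) (σ : Perm (Fin n))

theorem crossingProd_lastDecomp_castSucc (j : Fin n) :
    crossingProd (lastDecomp i σ) t j.castSucc = crossingProd σ (t.eraseIdx i) j := by
  rw [crossingProd, orderedProd_succAbove i fun h => by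
    simpa [lastDecomp_apply_self] using (h.2.trans (Fin.castSucc_lt_last j))]
  simp only [crossingProd, List.getD_eraseIdx_succAbove, lastDecomp_inv_castSucc,
    lastDecomp_apply_succAbove, Fin.succAbove_lt_succAbove_iff, Fin.castSucc_lt_castSucc_iff]

theorem crossingProd_lastDecomp_last (ht : t.length = n + 1) :
    crossingProd (lastDecomp i σ) t (Fin.last n) = (t.drop (i + 1)).prod := by
  rw [← orderedProd_gt_eq_prod_drop t ht, crossingProd]
  refine orderedProd_congr fun m => ?_
  rw [lastDecomp_inv_last, Fin.lt_last_iff_ne_last, ne_eq, ← lastDecomp_apply_self i σ,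
    (lastDecomp i σ).injective.eq_iff, Fin.lt_def]
  exact ⟨And.left, fun h => ⟨h, fun e => by simp [e] at h⟩⟩

theorem hurwitzLift_lastDecomp (ht : t.length = n + 1) :
    hurwitzLift (lastDecomp i σ) t = hurwitzLift σ (t.eraseIdx i) ++
      [(t.drop (i + 1)).prod⁻¹ * t.getD i 1 * (t.drop (i + 1)).prod] := by
  rw [hurwitzLift, List.ofFn_succ', List.concat_eq_append, hurwitzLiftEntry,
    crossingProd_lastDecomp_last t i σ ht, lastDecomp_inv_last]
  congr 2
  funext j
  simp only [hurwitzLiftEntry, crossingProd_lastDecomp_castSucc, lastDecomp_inv_castSucc,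
    List.getD_eraseIdx_succAbove]

end HurwitzLiftLastDecomp

/-- `β_t = ∑_{i=1}^k (−1)^{k−i} (β_{t(î)}, (t_{i+1}⋯t_k)⁻¹ t_i (t_{i+1}⋯t_k))`:
the signed Hurwitz sum `β` of a `k`-tuple expands as a signed sum over `i` of
`β` of the tuple with the `i`-th entry removed, with the conjugate
`(t_{i+1}⋯t_k)⁻¹ t_i (t_{i+1}⋯t_k)` appended to each tuple. Here `A` assigns to
every permutation (of every size) a reduced word, defining the braid lifts. -/
theorem betaElt_right_expansion {G : Type*} [Group G] (k : ℕ) (hk : 2 ≤ k)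
    (A : (n : ℕ) → Equiv.Perm (Fin n) → List ℕ)
    (hA : ∀ n (π : Equiv.Perm (Fin n)), IsReducedWordN n π (A n π))
    (l : List G) (hl : l.length = k) :
    betaElt k (A k) l =
      ∑ i : Fin k, ((-1 : ℤ) ^ (k - 1 - (i : ℕ))) •
        FreeAbelianGroup.map
          (fun s => s ++ [(l.drop ((i : ℕ) + 1)).prod⁻¹ *
            l.get (Fin.cast hl.symm i) * (l.drop ((i : ℕ) + 1)).prod])
          (betaElt (k - 1) (A (k - 1)) (l.eraseIdx (i : ℕ))) := by
  obtain ⟨n, rfl⟩ : ∃ n, k = n + 1 := ⟨k - 1, by omega⟩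
  have hlen (i : Fin (n + 1)) : (l.eraseIdx i).length = n := by
    rw [List.length_eraseIdx_of_lt (by omega), hl, Nat.add_sub_cancel]
  have hget (i : Fin (n + 1)) : l.get (Fin.cast hl.symm i) = l.getD i 1 :=
    (List.getD_eq_getElem _ _ _).symm
  simp only [betaElt, hget, Nat.add_one_sub_one, hurwitzWord_eq_hurwitzLift (hA _ _) _ hl,
    hurwitzWord_eq_hurwitzLift (hA _ _) _ (hlen _)]
  rw [← Fintype.sum_bijective _ lastDecomp_bijective _ _ fun _ => rfl, Fintype.sum_prod_type]
  refine Finset.sum_congr rfl fun i _ => ?_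
  rw [map_sum, Finset.smul_sum]
  refine Finset.sum_congr rfl fun σ _ => ?_
  rw [hurwitzLift_lastDecomp l i σ hl, sign_lastDecomp, map_zsmul, FreeAbelianGroup.map_of_apply,
    smul_smul]
  simp [mul_comm]
end

section
/- For the dihedral group of order 2m, the Milnor fibre F_{Q_0} of its reflection arrangement has H_0(F_{Q_0}; Z) ≅ Z and H_1(F_{Q_0}; Z) ≅ Z^{(m−1)²}; equivalently, for the chain complex 0 → Z[W_+] ⊗ Z^{m−1} →∂ Z[W_−] → 0 with ∂(r ⊗ e_j) = r t_j − r t_{j−1} (r a rotation, t_i the reflections, 2 ≤ j ≤ m), the image of ∂ is the rank-(m−1) submodule of Z[W_−] of elements whose coefficients sum to zero; hence ker ∂ has rank (m−1)² and coker ∂ ≅ Z. -/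
open DihedralGroup

/-- `t_i = s_1 (s_2 s_1)^{i-1}` in the dihedral group of order `2m`, where
`s_1 = sr 0` and `s_2 = sr 1`; these are the reflections for `1 ≤ i ≤ m`. -/
def dihT (m : ℕ) (i : ℕ) : DihedralGroup m :=
  sr 0 * (sr 1 * sr 0) ^ (i - 1)

/-- The boundary map `∂ : Z[W₊] ⊗ Z^{m−1} → Z[W₋]` of the chain complex
computing the homology of the Milnor fibre `F_{Q₀}` for the dihedral group of
order `2m`: the basis element `r ⊗ e_j` (a rotation `r = r_a` together with an
index `j ∈ {2, …, m}`, encoded as `(a, j₀)` with `j = j₀ + 2`) is sent to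
`r t_j − r t_{j−1}`. (The target is the group algebra `Z[W]`; the image lies in
the span `Z[W₋]` of the reflections.) -/
noncomputable def dihBnd (m : ℕ) :
    ((ZMod m × Fin (m - 1)) →₀ ℤ) →ₗ[ℤ] (DihedralGroup m →₀ ℤ) :=
  Finsupp.lsum ℤ fun d => LinearMap.toSpanSingleton ℤ _
    (Finsupp.single (DihedralGroup.r d.1 * dihT m ((d.2 : ℕ) + 2)) (1 : ℤ) -
      Finsupp.single (DihedralGroup.r d.1 * dihT m ((d.2 : ℕ) + 1)) (1 : ℤ))

open Finsupp Module Submodule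

/-! In the coordinates `t_{j+1} = sr (-j)`, the generator `r_a ⊗ e_{j+2}` goes to the difference
`sr (k - 1) - sr k` of two consecutive reflections, `k = -j - a`. These differences telescope
to every `sr j - sr 0`, so the image of `∂` is the whole augmentation kernel on `ℤ[W₋] ≅ ℤ^m`.
The augmentation then identifies the cokernel with `ℤ`, and rank–nullity gives
`rank ker ∂ = m (m - 1) - (m - 1) = (m - 1)²`. -/

namespace Submodule

universe u

variable {R N : Type*} {M : Type u} [Ring R] [AddCommGroup M] [Module R M] [AddCommGroup N]
  [Module R N] {S : Submodule R M} {φ : M →ₗ[R] N}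

noncomputable def quotComapInfKerEquiv (hφ : S.map φ = ⊤) :
    (S ⧸ comap S.subtype (S ⊓ LinearMap.ker φ)) ≃ₗ[R] N :=
  (quotEquivOfEq _ _ (by rw [comap_inf, comap_subtype_self, top_inf_eq, LinearMap.ker_comp])).trans
    (LinearMap.quotKerEquivOfSurjective (φ.comp S.subtype) <| LinearMap.range_eq_top.1 <| by
      rw [LinearMap.range_comp, Submodule.range_subtype, hφ])

theorem finrank_inf_ker_add_finrank [StrongRankCondition R] [HasRankNullity.{u} R]
    [Module.Finite R S] (hφ : S.map φ = ⊤) :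
    finrank R ↥(S ⊓ LinearMap.ker φ) + finrank R N = finrank R S := by
  rw [← (comapSubtypeEquivOfLe inf_le_left).finrank_eq, ← (quotComapInfKerEquiv hφ).finrank_eq,
    add_comm, finrank_quotient_add_finrank]

end Submodule

namespace Finsupp

variable {R α : Type*} [CommRing R]

variable (R α) in
noncomputable def augmentation : (α →₀ R) →ₗ[R] R :=
  Finsupp.lsum R fun _ => LinearMap.id

theorem augmentation_apply (x : α →₀ R) : augmentation R α x = x.sum fun _ c => c := rfl

@[simp]
theorem augmentation_single (a : α) (c : R) : augmentation R α (single a c) = c := by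
  simp [augmentation_apply]

theorem map_augmentation_supported {s : Set α} (hs : s.Nonempty) :
    (supported R R s).map (augmentation R α) = ⊤ :=
  eq_top_iff.2 fun c _ => ⟨single hs.some c, single_mem_supported R c hs.some_mem, by simp⟩

theorem single_sub_single_mem_supported_inf_ker_augmentation {s : Set α} {a b : α}
    (ha : a ∈ s) (hb : b ∈ s) :
    single a (1 : R) - single b 1 ∈ supported R R s ⊓ LinearMap.ker (augmentation R α) :=
  ⟨sub_mem (single_mem_supported R 1 ha) (single_mem_supported R 1 hb), by simp⟩

theorem supported_inf_ker_augmentation_le_span (s : Set α) (b : α) :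
    supported R R s ⊓ LinearMap.ker (augmentation R α) ≤
      span R ((fun a => single a 1 - single b 1) '' s) := by
  rintro x ⟨hx, hx0⟩
  have hx_eq : x = x.sum fun a c => c • (single a (1 : R) - single b 1) := by
    simp only [smul_sub, Finsupp.sum_sub, smul_single_one, sum_single, ← single_sum,
      ← augmentation_apply, LinearMap.mem_ker.1 hx0, single_zero, sub_zero]
  rw [hx_eq]
  refine Submodule.finsuppSum_mem _ _ _ _ fun a ha => smul_mem _ _ (subset_span ?_)
  exact Set.mem_image_of_mem _ ((mem_supported R x).1 hx (mem_support_iff.2 ha))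

theorem finrank_supported [StrongRankCondition R] [Finite α] (s : Set α) :
    finrank R (supported R R s) = Nat.card s := by
  have : Fintype s := Fintype.ofFinite s
  rw [(supportedEquivFinsupp s).finrank_eq, finrank_finsupp_self, Fintype.card_eq_nat_card]

theorem finrank_supported_inf_ker_augmentation [IsDomain R] [Finite α] {s : Set α}
    (hs : s.Nonempty) :
    finrank R ↥(supported R R s ⊓ LinearMap.ker (augmentation R α)) = Nat.card s - 1 := by
  have : Module.Finite R (supported R R s) := Module.Finite.equiv (supportedEquivFinsupp s).symm
  have h := finrank_inf_ker_add_finrank (map_augmentation_supported (R := R) hs)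
  rw [finrank_self, finrank_supported] at h
  omega

end Finsupp

theorem dihT_succ (m j : ℕ) : dihT m (j + 1) = sr (-(j : ZMod m)) := by
  rw [dihT, Nat.add_sub_cancel, sr_mul_sr, r_pow, sr_mul_r]
  ring_nf

theorem DihedralGroup.sr_injective {n : ℕ} :
    Function.Injective (sr : ZMod n → DihedralGroup n) :=
  fun _ _ => sr.inj

section

variable {m : ℕ}

theorem dihBnd_single (a : ZMod m) (j : Fin (m - 1)) :
    dihBnd m (single (a, j) 1) =
      single (sr (-((j : ℕ) : ZMod m) - 1 - a)) 1 -
        single (sr (-((j : ℕ) : ZMod m) - a)) 1 := by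
  rw [dihBnd, lsum_single, LinearMap.toSpanSingleton_apply, one_smul,
    show (j : ℕ) + 2 = (j + 1) + 1 from rfl, dihT_succ, dihT_succ, r_mul_sr, r_mul_sr]
  push_cast
  ring_nf

theorem single_sr_pred_sub_single_sr_mem_range_dihBnd (hm : 2 ≤ m) (k : ZMod m) :
    single (sr (k - 1)) (1 : ℤ) - single (sr k) 1 ∈ LinearMap.range (dihBnd m) :=
  ⟨single (-k, ⟨0, by omega⟩) 1, by rw [dihBnd_single]; simp [neg_add_eq_sub]⟩

theorem single_sr_sub_single_sr_zero_mem_range_dihBnd (hm : 2 ≤ m) (j : ZMod m) :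
    single (sr j) (1 : ℤ) - single (sr 0) 1 ∈ LinearMap.range (dihBnd m) := by
  have : NeZero m := ⟨by omega⟩
  obtain ⟨k, rfl⟩ := ZMod.natCast_zmod_surjective j
  induction k with
  | zero => simp
  | succ k ih =>
    have h := sub_mem ih (single_sr_pred_sub_single_sr_mem_range_dihBnd hm (k + 1))
    rw [add_sub_cancel_right, sub_sub_sub_cancel_left] at h
    push_cast
    exact h

theorem range_dihBnd (hm : 2 ≤ m) :
    LinearMap.range (dihBnd m) =
      supported ℤ ℤ (Set.range sr) ⊓ LinearMap.ker (augmentation ℤ (DihedralGroup m)) := by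
  apply le_antisymm
  · rw [LinearMap.range_eq_map, ← supported_univ, supported_eq_span_single, map_span_le]
    rintro _ ⟨⟨a, j⟩, -, rfl⟩
    rw [dihBnd_single]
    exact single_sub_single_mem_supported_inf_ker_augmentation ⟨_, rfl⟩ ⟨_, rfl⟩
  · refine (supported_inf_ker_augmentation_le_span _ (sr 0)).trans (span_le.2 ?_)
    rintro _ ⟨_, ⟨j, rfl⟩, rfl⟩
    exact single_sr_sub_single_sr_zero_mem_range_dihBnd hm j

theorem finrank_ker_dihBnd (hm : 2 ≤ m) :
    finrank ℤ (LinearMap.ker (dihBnd m)) = (m - 1) ^ 2 := by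
  have : NeZero m := ⟨by omega⟩
  have h := (LinearMap.ker (dihBnd m)).finrank_quotient_add_finrank
  rw [(dihBnd m).quotKerEquivRange.finrank_eq, range_dihBnd hm,
    finrank_supported_inf_ker_augmentation (Set.range_nonempty sr),
    Nat.card_range_of_injective sr_injective, Nat.card_zmod, finrank_finsupp_self,
    Fintype.card_prod, ZMod.card, Fintype.card_fin] at h
  obtain ⟨n, rfl⟩ : ∃ n, m = n + 1 := ⟨m - 1, by omega⟩
  simp only [Nat.add_sub_cancel] at h ⊢
  nlinarith

end

/-- For the dihedral group of order `2m`, the Milnor fibre `F_{Q₀}` of its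
reflection arrangement has `H₀(F_{Q₀}; ℤ) ≅ ℤ` and
`H₁(F_{Q₀}; ℤ) ≅ ℤ^{(m−1)²}`: for the chain complex
`0 → Z[W₊] ⊗ Z^{m−1} →∂ Z[W₋] → 0` with `∂(r ⊗ e_j) = r t_j − r t_{j−1}`,
the image of `∂` is exactly the submodule of `Z[W₋]` (the span of the
reflections) consisting of the elements whose coefficients sum to zero; the
kernel of `∂` has rank `(m−1)²` (it is `H₁`), and the quotient of `Z[W₋]` by
the image (the cokernel, i.e. `H₀`) is isomorphic to `ℤ`. -/
theorem dihedral_milnor_fibre_homology (m : ℕ) (hm : 3 ≤ m) :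
    (∀ x : DihedralGroup m →₀ ℤ,
      x ∈ LinearMap.range (dihBnd m) ↔
        ((∀ w ∈ x.support, ∃ j : ZMod m, w = DihedralGroup.sr j) ∧
          (x.sum fun _ c => c) = 0)) ∧
    Nonempty ((LinearMap.ker (dihBnd m)) ≃ₗ[ℤ] (Fin ((m - 1) ^ 2) → ℤ)) ∧
    Nonempty
      ((↥(Submodule.span ℤ {x : DihedralGroup m →₀ ℤ |
            ∃ j : ZMod m, x = Finsupp.single (DihedralGroup.sr j) (1 : ℤ)}) ⧸
          Submodule.comap
            (Submodule.span ℤ {x : DihedralGroup m →₀ ℤ |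
              ∃ j : ZMod m, x = Finsupp.single (DihedralGroup.sr j) (1 : ℤ)}).subtype
            (LinearMap.range (dihBnd m))) ≃ₗ[ℤ] ℤ) := by
  have hm2 : 2 ≤ m := by omega
  have : NeZero m := ⟨by omega⟩
  have hrange := range_dihBnd hm2
  have hspan : span ℤ {x : DihedralGroup m →₀ ℤ | ∃ j : ZMod m, x = single (sr j) 1} =
      supported ℤ ℤ (Set.range sr) := by
    rw [supported_eq_span_single, ← Set.range_comp]
    congr 1
    ext
    simp [eq_comm]
  refine ⟨fun x => ?_, ⟨(finBasisOfFinrankEq ℤ _ (finrank_ker_dihBnd hm2)).equivFun⟩, ?_⟩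
  · rw [hrange, mem_inf, mem_supported, LinearMap.mem_ker, augmentation_apply]
    simp [Set.subset_def, eq_comm]
  · rw [hspan, hrange]
    exact ⟨quotComapInfKerEquiv (map_augmentation_supported (Set.range_nonempty sr))⟩
end
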